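/- For every chain mixed graph G on node set V and every C ⊆ V, the graph α_CMG(G;∅,C) produced by the conditioning algorithm is a chain mixed graph. -/

import Mathlib

/-!
Common definitions: mixed graphs, walks, sections, colliders, c-separation, and the
marginalization / conditioning / anterial-graph algorithms of Sadeghi,
"Marginalization and conditioning for LWF chain graphs".
-/

namespace LWF

variable {V : Type*} {W : Type*}

/-- A mixed graph: a node set together with three edge relations
(lines `i — j`, arrows `i → j`, arcs `i ↔ j`). -/
structure MixedGraph (V : Type*) where
  nodes : Set V
  line : V → V → Prop
  arrow : V → V → Prop
  arc : V → V → Prop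

namespace MixedGraph

/-- The structural axioms of a (loopless) mixed graph: lines and arcs are symmetric,
all three relations are irreflexive, and edges join nodes of the graph. -/
def IsMixedGraph (G : MixedGraph V) : Prop :=
  (∀ i j, G.line i j → G.line j i) ∧ (∀ i, ¬ G.line i i) ∧
  (∀ i, ¬ G.arrow i i) ∧
  (∀ i j, G.arc i j → G.arc j i) ∧ (∀ i, ¬ G.arc i i) ∧
  (∀ i j, G.line i j → i ∈ G.nodes ∧ j ∈ G.nodes) ∧
  (∀ i j, G.arrow i j → i ∈ G.nodes ∧ j ∈ G.nodes) ∧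
  (∀ i j, G.arc i j → i ∈ G.nodes ∧ j ∈ G.nodes)

/-- `i` and `j` are adjacent: some edge joins them. -/
def adj (G : MixedGraph V) (i j : V) : Prop :=
  G.line i j ∨ G.arrow i j ∨ G.arrow j i ∨ G.arc i j

/-- A single step of a semi-directed walk: a line, or an arrow pointing forwards. -/
def sdStep (G : MixedGraph V) (i j : V) : Prop := G.line i j ∨ G.arrow i j

/-- `i` is an anterior of `j`: there is a (nontrivial) semi-directed walk from `i` to `j`;
by convention a node is not an anterior of itself. -/
def anterior (G : MixedGraph V) (i j : V) : Prop :=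
  i ≠ j ∧ Relation.TransGen G.sdStep i j

/-- The set of anteriors of a node. -/
def ant (G : MixedGraph V) (j : V) : Set V := {i | G.anterior i j}

/-- `ant(C) = (⋃ c ∈ C, ant(c)) \ C` -/
def antSet (G : MixedGraph V) (C : Set V) : Set V := (⋃ c ∈ C, G.ant c) \ C

/-- No semi-directed cycle containing at least one arrow: equivalently, there is no
arrow `a → b` together with a semi-directed walk from `b` back to `a`. -/
def NoArrowSemiDirectedCycle (G : MixedGraph V) : Prop :=
  ∀ a b, G.arrow a b → ¬ Relation.ReflTransGen G.sdStep b a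

/-- chain mixed graph -/
def IsCMG (G : MixedGraph V) : Prop := G.IsMixedGraph ∧ G.NoArrowSemiDirectedCycle

/-- chain graph: a CMG without arcs -/
def IsCG (G : MixedGraph V) : Prop := G.IsCMG ∧ ∀ i j, ¬ G.arc i j

/-- anterial graph: a CMG in which no arc has an endpoint that is an anterior of the
other endpoint -/
def IsAnG (G : MixedGraph V) : Prop :=
  G.IsCMG ∧ ∀ i j, G.arc i j → ¬ G.anterior i j

/-- `p` is a path consisting only of lines, from `a` to `b` (possibly a single node). -/
def lineSection (G : MixedGraph V) (p : List V) (a b : V) : Prop :=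
  p ≠ [] ∧ p.Chain' G.line ∧ p.Nodup ∧ p.head? = some a ∧ p.getLast? = some b

end MixedGraph

/-- The kind of a non-line connecting edge on a walk. -/
inductive Conn : Type
  | fwd   -- an arrow pointing forwards along the walk
  | bwd   -- an arrow pointing backwards along the walk
  | biarc -- an arc

/-- The connecting edge has an arrowhead pointing at the following section. -/
def Conn.headTowardsNext : Conn → Prop
  | .fwd => True
  | .bwd => False
  | .biarc => True

/-- The connecting edge has an arrowhead pointing at the preceding section. -/
def Conn.headTowardsPrev : Conn → Prop
  | .fwd => False
  | .bwd => True
  | .biarc => True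

/-- The connecting edge of kind `c` from `a` to `b` is present in `G`. -/
def MixedGraph.connOK (G : MixedGraph V) : Conn → V → V → Prop
  | .fwd, a, b => G.arrow a b
  | .bwd, a, b => G.arrow b a
  | .biarc, a, b => G.arc a b

/-- A walk in a mixed graph, presented by its (unique) decomposition into sections:
a first section followed by a list of non-line connecting edges, each with the next
section. Each section is a nonempty list of nodes joined by lines. -/
structure MWalk (V : Type*) where
  first : List V
  rest : List (Conn × List V)

namespace MWalk

/-- The list of sections of a walk. -/
def sections (w : MWalk V) : List (List V) := w.first :: w.rest.map Prod.snd

/-- The list of connecting (non-line) edges of a walk. -/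
def conns (w : MWalk V) : List Conn := w.rest.map Prod.fst

/-- The list of all nodes of a walk, in order. -/
def nodes (w : MWalk V) : List V := w.sections.flatten

/-- The inner nodes of a walk: all nodes except the two endpoints. -/
def innerNodes (w : MWalk V) : List V := (w.nodes.drop 1).dropLast

/-- The section with index `k` is a collider section of the walk: it is an inner
section and the connecting edges on both sides have an arrowhead pointing at it. -/
def colliderAt (w : MWalk V) (k : ℕ) : Prop :=
  0 < k ∧ k < w.conns.length ∧
  (∃ c, w.conns[k-1]? = some c ∧ c.headTowardsNext) ∧
  (∃ c, w.conns[k]? = some c ∧ c.headTowardsPrev)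

/-- There is an arrowhead pointing at the endpoint section containing the first node. -/
def headAtStart (w : MWalk V) : Prop :=
  ∃ c, w.conns[0]? = some c ∧ c.headTowardsPrev

/-- There is an arrowhead pointing at the endpoint section containing the last node. -/
def headAtEnd (w : MWalk V) : Prop :=
  ∃ c, w.conns[w.conns.length - 1]? = some c ∧ c.headTowardsNext

/-- The walk is `c`-connecting given `C`: every collider section contains a node of `C`
and no non-collider section contains a node of `C`. -/
def cConnecting (w : MWalk V) (C : Set V) : Prop :=
  (∀ k s, w.sections[k]? = some s → w.colliderAt k → ∃ x ∈ s, x ∈ C) ∧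
  (∀ k s, w.sections[k]? = some s → ¬ w.colliderAt k → ∀ x ∈ s, x ∉ C)

end MWalk

/-- Two walks between the same endpoints are endpoint-identical: one has an arrowhead
pointing at its endpoint section containing the first (resp. last) endpoint exactly when
the other does. -/
def EndpointIdentical (w₁ w₂ : MWalk V) : Prop :=
  (w₁.headAtStart ↔ w₂.headAtStart) ∧ (w₁.headAtEnd ↔ w₂.headAtEnd)

/-- Auxiliary: the tail of a walk is realized in `G`, starting at node `a`
and ending at node `j`. -/
def walkAux (G : MixedGraph V) : V → List (Conn × List V) → V → Prop
  | a, [], j => a = j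
  | a, (c, s) :: rest, j =>
      s ≠ [] ∧ s.Chain' G.line ∧
      (∃ b, s.head? = some b ∧ G.connOK c a b) ∧
      (∃ e, s.getLast? = some e ∧ walkAux G e rest j)

/-- `w` is a walk in `G` between `i` and `j` (read from `i` to `j`). -/
def MWalk.IsWalkFrom (w : MWalk V) (G : MixedGraph V) (i j : V) : Prop :=
  w.first ≠ [] ∧ w.first.Chain' G.line ∧ w.first.head? = some i ∧
  ∃ e, w.first.getLast? = some e ∧ walkAux G e w.rest j

namespace MixedGraph

/-- There is a `c`-connecting walk between `i` and `j` given `C` in `G`. -/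
def cConnect (G : MixedGraph V) (i j : V) (C : Set V) : Prop :=
  ∃ w : MWalk V, w.IsWalkFrom G i j ∧ w.cConnecting C

/-- `A ⊥_c B | C` in `G`. -/
def cSep (G : MixedGraph V) (A B C : Set V) : Prop :=
  ∀ i ∈ A, ∀ j ∈ B, ¬ G.cConnect i j C

/-- `edgeB G i j hi hj`: there is an edge between `i` and `j` in `G` with an arrowhead
at `i` iff `hi = true`, and an arrowhead at `j` iff `hj = true`. -/
def edgeB (G : MixedGraph V) (i j : V) : Bool → Bool → Prop
  | false, false => G.line i j
  | false, true => G.arrow i j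
  | true, false => G.arrow j i
  | true, true => G.arc i j

/-- A graph is maximal if every pair of distinct non-adjacent nodes is c-separated by
some node set. -/
def MaximalCMG (G : MixedGraph V) : Prop :=
  ∀ i ∈ G.nodes, ∀ j ∈ G.nodes, i ≠ j → ¬ G.adj i j →
    ∃ C : Set V, C ⊆ G.nodes ∧ i ∉ C ∧ j ∉ C ∧ ¬ G.cConnect i j C

/-- Delete the nodes in `M` together with all edges incident to them. -/
def deleteNodes (G : MixedGraph V) (M : Set V) : MixedGraph V where
  nodes := G.nodes \ M
  line i j := G.line i j ∧ i ∉ M ∧ j ∉ M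
  arrow i j := G.arrow i j ∧ i ∉ M ∧ j ∉ M
  arc i j := G.arc i j ∧ i ∉ M ∧ j ∉ M

/-! ### the marginalization algorithm -/

/-- Case 9 of step 1 of the marginalization algorithm: a collider trislide
`m → i — ⋯ — t ↔ j` with `m ∈ M` generates the arc `i ↔ j`. -/
def margGen9 (G : MixedGraph V) (M : Set V) (i j : V) : Prop :=
  ∃ m ∈ M, ∃ p t, G.arrow m i ∧ G.lineSection p i t ∧ G.arc t j ∧
    j ∉ p ∧ m ∉ p ∧ j ≠ m

/-- Step 1 of the marginalization algorithm: for every collider trislide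
`m → i — ⋯ — t ← j` (resp. `m → i — ⋯ — t ↔ j`) with endpoint `m ∈ M`, add the arrow
`j → i` (resp. the arc `i ↔ j`). -/
def margStep1 (G : MixedGraph V) (M : Set V) : MixedGraph V where
  nodes := G.nodes
  line := G.line
  arrow a b := G.arrow a b ∨
    ∃ m ∈ M, ∃ p t, G.arrow m b ∧ G.lineSection p b t ∧ G.arrow a t ∧
      a ∉ p ∧ m ∉ p ∧ a ≠ m
  arc a b := G.arc a b ∨ G.margGen9 M a b ∨ G.margGen9 M b a

end MixedGraph

/-- The kind of an edge. -/
inductive EKind : Type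
  | ln  -- a line
  | ar  -- an arrow
  | bi  -- an arc

/-- Step 2 of the marginalization algorithm, as a closure: starting from the edges of
`H`, repeatedly add, for every tripath with inner node `m ∈ M`, the edge given in
Table 1 (cases 1-7), until no new edge can be added. `MargCl H M EKind.ar a b` means:
an arrow from `a` to `b`. -/
inductive MargCl (H : MixedGraph V) (M : Set V) : EKind → V → V → Prop
  | base_ln {i j : V} : H.line i j → MargCl H M EKind.ln i j
  | base_ar {i j : V} : H.arrow i j → MargCl H M EKind.ar i j
  | base_bi {i j : V} : H.arc i j → MargCl H M EKind.bi i j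
  | symm_ln {i j : V} : MargCl H M EKind.ln i j → MargCl H M EKind.ln j i
  | symm_bi {i j : V} : MargCl H M EKind.bi i j → MargCl H M EKind.bi j i
  /-- `i ← m ← j` generates the arrow `j → i` -/
  | r1 {i j m : V} : m ∈ M → i ≠ j → MargCl H M EKind.ar j m →
      MargCl H M EKind.ar m i → MargCl H M EKind.ar j i
  /-- `i ← m — j` generates the arrow `j → i` -/
  | r2 {i j m : V} : m ∈ M → i ≠ j → MargCl H M EKind.ln m j →
      MargCl H M EKind.ar m i → MargCl H M EKind.ar j i
  /-- `i ↔ m — j` generates the arc `i ↔ j` -/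
  | r3 {i j m : V} : m ∈ M → i ≠ j → MargCl H M EKind.bi i m →
      MargCl H M EKind.ln m j → MargCl H M EKind.bi i j
  /-- `i ← m → j` generates the arc `i ↔ j` -/
  | r4 {i j m : V} : m ∈ M → i ≠ j → MargCl H M EKind.ar m i →
      MargCl H M EKind.ar m j → MargCl H M EKind.bi i j
  /-- `i ← m ↔ j` generates the arc `i ↔ j` -/
  | r5 {i j m : V} : m ∈ M → i ≠ j → MargCl H M EKind.ar m i →
      MargCl H M EKind.bi m j → MargCl H M EKind.bi i j
  /-- `i — m ← j` generates the arrow `j → i` -/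
  | r6 {i j m : V} : m ∈ M → i ≠ j → MargCl H M EKind.ln i m →
      MargCl H M EKind.ar j m → MargCl H M EKind.ar j i
  /-- `i — m — j` generates the line `i — j` -/
  | r7 {i j m : V} : m ∈ M → i ≠ j → MargCl H M EKind.ln i m →
      MargCl H M EKind.ln m j → MargCl H M EKind.ln i j

namespace MixedGraph

/-- The graph obtained after steps 1 and 2 of the marginalization algorithm. -/
def margCore (G : MixedGraph V) (M : Set V) : MixedGraph V where
  nodes := G.nodes
  line := MargCl (G.margStep1 M) M EKind.ln
  arrow := MargCl (G.margStep1 M) M EKind.ar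
  arc := MargCl (G.margStep1 M) M EKind.bi

/-- The marginalization algorithm `α_CMG(G; M, ∅)`. -/
def alphaMarg (G : MixedGraph V) (M : Set V) : MixedGraph V :=
  (G.margCore M).deleteNodes M

/-! ### the conditioning algorithm -/

/-- Step 2, case 4, of the conditioning algorithm: a collider trislide
`s ↔ b — ⋯ — t ← a` with `s ∈ S` generates the arrow `a → b`. -/
def condGenArrow (G : MixedGraph V) (S : Set V) (a b : V) : Prop :=
  ∃ s ∈ S, ∃ p t, G.arc s b ∧ G.lineSection p b t ∧ G.arrow a t ∧
    a ∉ p ∧ s ∉ p ∧ a ≠ s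

/-- Step 2, case 5, of the conditioning algorithm: a collider trislide
`s ↔ i — ⋯ — t ↔ j` with `s ∈ S` generates the arc `i ↔ j`. -/
def condGenArc (G : MixedGraph V) (S : Set V) (i j : V) : Prop :=
  ∃ s ∈ S, ∃ p t, G.arc s i ∧ G.lineSection p i t ∧ G.arc t j ∧
    j ∉ p ∧ s ∉ p ∧ j ≠ s

/-- The graph obtained after step 2 of the conditioning algorithm. -/
def condStep2 (G : MixedGraph V) (S : Set V) : MixedGraph V where
  nodes := G.nodes
  line := G.line
  arrow a b := G.arrow a b ∨ G.condGenArrow S a b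
  arc a b := G.arc a b ∨ G.condGenArc S a b ∨ G.condGenArc S b a

end MixedGraph

/-- Step 3 of the conditioning algorithm, as a closure: starting from the edges of `H`,
repeatedly add, for every collider trislide whose inner section has all its nodes in
`S`, the indicated edge; lines generated in this step are not used to form new
sections (sections are formed from the lines of `H` only). -/
inductive CondCl (H : MixedGraph V) (S : Set V) : EKind → V → V → Prop
  | base_ln {i j : V} : H.line i j → CondCl H S EKind.ln i j
  | base_ar {i j : V} : H.arrow i j → CondCl H S EKind.ar i j
  | base_bi {i j : V} : H.arc i j → CondCl H S EKind.bi i j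
  | symm_ln {i j : V} : CondCl H S EKind.ln i j → CondCl H S EKind.ln j i
  | symm_bi {i j : V} : CondCl H S EKind.bi i j → CondCl H S EKind.bi j i
  /-- `i → s — ⋯ — s ← j` generates the line `i — j` -/
  | rLL {i j a b : V} {p : List V} :
      H.lineSection p a b → (∀ x ∈ p, x ∈ S) → i ≠ j → i ∉ p → j ∉ p →
      CondCl H S EKind.ar i a → CondCl H S EKind.ar j b → CondCl H S EKind.ln i j
  /-- `i ↔ s — ⋯ — s ← j` generates the arrow `j → i` -/
  | rBL {i j a b : V} {p : List V} :
      H.lineSection p a b → (∀ x ∈ p, x ∈ S) → i ≠ j → i ∉ p → j ∉ p →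
      CondCl H S EKind.bi i a → CondCl H S EKind.ar j b → CondCl H S EKind.ar j i
  /-- `i ↔ s — ⋯ — s ↔ j` generates the arc `i ↔ j` -/
  | rBB {i j a b : V} {p : List V} :
      H.lineSection p a b → (∀ x ∈ p, x ∈ S) → i ≠ j → i ∉ p → j ∉ p →
      CondCl H S EKind.bi i a → CondCl H S EKind.bi j b → CondCl H S EKind.bi i j

namespace MixedGraph

/-- Step 4 of the conditioning algorithm: remove all arrowheads pointing at members of
`S`; arrows pointing at `S` become lines, and arcs with an endpoint in `S` become
arrows pointing away from that endpoint (arcs with both endpoints in `S` become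
lines). -/
def removeHeads (G : MixedGraph V) (S : Set V) : MixedGraph V where
  nodes := G.nodes
  line a b := G.line a b ∨ (G.arrow a b ∧ b ∈ S) ∨ (G.arrow b a ∧ a ∈ S) ∨
    (G.arc a b ∧ a ∈ S ∧ b ∈ S)
  arrow a b := (G.arrow a b ∧ b ∉ S) ∨ (G.arc a b ∧ a ∈ S ∧ b ∉ S)
  arc a b := G.arc a b ∧ a ∉ S ∧ b ∉ S

/-- The graph obtained after steps 1–3 of the conditioning algorithm. -/
def condCore (G : MixedGraph V) (C : Set V) : MixedGraph V where
  nodes := G.nodes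
  line := CondCl (G.condStep2 (C ∪ G.antSet C)) (C ∪ G.antSet C) EKind.ln
  arrow := CondCl (G.condStep2 (C ∪ G.antSet C)) (C ∪ G.antSet C) EKind.ar
  arc := CondCl (G.condStep2 (C ∪ G.antSet C)) (C ∪ G.antSet C) EKind.bi

/-- The conditioning algorithm `α_CMG(G; ∅, C)`. -/
def alphaCond (G : MixedGraph V) (C : Set V) : MixedGraph V :=
  ((G.condCore C).removeHeads (C ∪ G.antSet C)).deleteNodes C

/-- Simultaneous marginalization and conditioning:
`α_CMG(G; M, C) = α_CMG(α_CMG(G; M, ∅); ∅, C)`. -/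
def alphaCMG (G : MixedGraph V) (M C : Set V) : MixedGraph V :=
  (G.alphaMarg M).alphaCond C

/-! ### anterial graphs -/

/-- Step 3 of the anterial-graph algorithm: a trislide `a → t — ⋯ — b ↔ k` with
`k ∈ ant(b)` generates the arrow `a → b`. -/
def angGen3Arrow (H : MixedGraph V) (a b : V) : Prop :=
  ∃ p t k, H.arrow a t ∧ H.lineSection p t b ∧ H.arc b k ∧ H.anterior k b ∧
    a ∉ p ∧ k ∉ p ∧ a ≠ k

/-- Step 3 of the anterial-graph algorithm: a trislide `a ↔ t — ⋯ — b ↔ k` with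
`k ∈ ant(b)` generates the arc `a ↔ b`. -/
def angGen3Arc (H : MixedGraph V) (a b : V) : Prop :=
  ∃ p t k, H.arc a t ∧ H.lineSection p t b ∧ H.arc b k ∧ H.anterior k b ∧
    a ∉ p ∧ k ∉ p ∧ a ≠ k

/-- The graph obtained after step 3 of the anterial-graph algorithm applied to `H`. -/
def angStep3 (H : MixedGraph V) : MixedGraph V where
  nodes := H.nodes
  line := H.line
  arrow a b := H.arrow a b ∨ H.angGen3Arrow a b
  arc a b := H.arc a b ∨ H.angGen3Arc a b ∨ H.angGen3Arc b a

end MixedGraph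

/-- Step 4 of the anterial-graph algorithm, as a closure: repeatedly add, for every
trislide `j → k₁ — ⋯ — k_m ↔ i` (resp. `j ↔ k₁ — ⋯ — k_m ↔ i`) with some `k_r ∈ ant(i)`,
the arrow `j → i` (resp. the arc `j ↔ i`). -/
inductive AnGCl (H : MixedGraph V) : EKind → V → V → Prop
  | base_ln {i j : V} : H.line i j → AnGCl H EKind.ln i j
  | base_ar {i j : V} : H.arrow i j → AnGCl H EKind.ar i j
  | base_bi {i j : V} : H.arc i j → AnGCl H EKind.bi i j
  | symm_bi {i j : V} : AnGCl H EKind.bi i j → AnGCl H EKind.bi j i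
  /-- `j → k₁ — ⋯ — k_m ↔ i` with some `k_r ∈ ant(i)` generates the arrow `j → i` -/
  | r_ar {i j a b : V} {p : List V} :
      H.lineSection p a b → (∃ r ∈ p, H.anterior r i) → j ∉ p → i ∉ p → j ≠ i →
      AnGCl H EKind.ar j a → AnGCl H EKind.bi b i → AnGCl H EKind.ar j i
  /-- `j ↔ k₁ — ⋯ — k_m ↔ i` with some `k_r ∈ ant(i)` generates the arc `j ↔ i` -/
  | r_bi {i j a b : V} {p : List V} :
      H.lineSection p a b → (∃ r ∈ p, H.anterior r i) → j ∉ p → i ∉ p → j ≠ i →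
      AnGCl H EKind.bi j a → AnGCl H EKind.bi b i → AnGCl H EKind.bi j i

namespace MixedGraph

/-- The graph obtained after step 4 of the anterial-graph algorithm applied to `H`. -/
def angStep4Graph (H : MixedGraph V) : MixedGraph V where
  nodes := H.nodes
  line := AnGCl H EKind.ln
  arrow := AnGCl H EKind.ar
  arc := AnGCl H EKind.bi

/-- Step 5 of the anterial-graph algorithm: replace every arc `a ↔ b` with `a ∈ ant(b)`
by the arrow `a → b`, and by the line `a — b` if also `b ∈ ant(a)`. -/
def angStep5 (K : MixedGraph V) : MixedGraph V where
  nodes := K.nodes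
  line a b := K.line a b ∨ (K.arc a b ∧ K.anterior a b ∧ K.anterior b a)
  arrow a b := K.arrow a b ∨ (K.arc a b ∧ K.anterior a b ∧ ¬ K.anterior b a)
  arc a b := K.arc a b ∧ ¬ K.anterior a b ∧ ¬ K.anterior b a

/-- The operation `α_{CMG.AnG}`: steps 3, 4, and 5 of the anterial-graph algorithm. -/
def cmgToAnG (H : MixedGraph V) : MixedGraph V :=
  H.angStep3.angStep4Graph.angStep5

/-- The anterial-graph algorithm `α_AnG(G; M, C) = α_{CMG.AnG}(α_CMG(G; M, C))`. -/
def alphaAnG (G : MixedGraph V) (M C : Set V) : MixedGraph V :=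
  (G.alphaCMG M C).cmgToAnG

/-- A subprimitive inducing walk from `j` to `i` in `G`: a walk from `j` to `i` all of
whose (inner) sections are collider and have all their nodes in `ant(i)`. -/
def SubprimFrom (G : MixedGraph V) (w : MWalk V) (j i : V) : Prop :=
  w.IsWalkFrom G j i ∧
  (∀ k, 0 < k → k < w.conns.length → w.colliderAt k) ∧
  (∀ k s, 0 < k → k < w.conns.length → w.sections[k]? = some s →
    ∀ x ∈ s, G.anterior x i)

end MixedGraph

/-- The image of a mixed graph under a map of node sets. -/
def MixedGraph.gmap (f : V → W) (G : MixedGraph V) : MixedGraph W where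
  nodes := f '' G.nodes
  line a b := ∃ i j, G.line i j ∧ a = f i ∧ b = f j
  arrow a b := ∃ i j, G.arrow i j ∧ a = f i ∧ b = f j
  arc a b := ∃ i j, G.arc i j ∧ a = f i ∧ b = f j

end LWF

/-!
Let `S = C ∪ ant(C)`; it contains every anterior of its members. Outside `S` the edges added in
steps 2 and 3 are traced back to `G`: an arrow `a → b` with `a ∉ S` begins a semi-directed walk
`a → t ⋯ b` of `G`, and a line with an endpoint outside `S` joins two mutual anteriors in `G`.
After step 4 no arrowhead points into `S`, so a semi-directed walk that starts outside `S` stays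
outside `S` and lifts to `G`. An arrow `a → b` of the result has `b ∉ S`, hence a semi-directed
cycle through it lifts to one of `G` through an arrow.
-/

namespace LWF

open Relation

variable {V : Type*} {G : MixedGraph V}

namespace MixedGraph

theorem IsMixedGraph.deleteNodes (hG : G.IsMixedGraph) (M : Set V) :
    (G.deleteNodes M).IsMixedGraph := by
  obtain ⟨hl, hl', har', hb, hb', hln, harn, hbn⟩ := hG
  refine ⟨?_, ?_, ?_, ?_, ?_, ?_, ?_, ?_⟩
  · exact fun i j ⟨h, hi, hj⟩ => ⟨hl i j h, hj, hi⟩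
  · exact fun i ⟨h, _⟩ => hl' i h
  · exact fun i ⟨h, _⟩ => har' i h
  · exact fun i j ⟨h, hi, hj⟩ => ⟨hb i j h, hj, hi⟩
  · exact fun i ⟨h, _⟩ => hb' i h
  · exact fun i j ⟨h, hi, hj⟩ => ⟨⟨(hln i j h).1, hi⟩, (hln i j h).2, hj⟩
  · exact fun i j ⟨h, hi, hj⟩ => ⟨⟨(harn i j h).1, hi⟩, (harn i j h).2, hj⟩
  · exact fun i j ⟨h, hi, hj⟩ => ⟨⟨(hbn i j h).1, hi⟩, (hbn i j h).2, hj⟩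

theorem NoArrowSemiDirectedCycle.deleteNodes (hG : G.NoArrowSemiDirectedCycle) (M : Set V) :
    (G.deleteNodes M).NoArrowSemiDirectedCycle := by
  rintro a b ⟨hab, -, -⟩ hba
  exact hG a b hab (ReflTransGen.mono (fun _ _ h => h.imp And.left And.left) _ _ hba)

theorem IsMixedGraph.removeHeads (hG : G.IsMixedGraph) (S : Set V) :
    (G.removeHeads S).IsMixedGraph := by
  obtain ⟨hl, hl', har', hb, hb', hln, harn, hbn⟩ := hG
  refine ⟨?_, ?_, ?_, ?_, ?_, ?_, ?_, ?_⟩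
  · rintro i j (h | ⟨h, hj⟩ | ⟨h, hi⟩ | ⟨h, hi, hj⟩)
    exacts [Or.inl (hl i j h), Or.inr (Or.inr (Or.inl ⟨h, hj⟩)), Or.inr (Or.inl ⟨h, hi⟩),
      Or.inr (Or.inr (Or.inr ⟨hb i j h, hj, hi⟩))]
  · rintro i (h | ⟨h, -⟩ | ⟨h, -⟩ | ⟨h, -⟩)
    exacts [hl' i h, har' i h, har' i h, hb' i h]
  · rintro i (⟨h, -⟩ | ⟨h, -⟩)
    exacts [har' i h, hb' i h]
  · exact fun i j ⟨h, hi, hj⟩ => ⟨hb i j h, hj, hi⟩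
  · exact fun i ⟨h, _⟩ => hb' i h
  · rintro i j (h | ⟨h, -⟩ | ⟨h, -⟩ | ⟨h, -⟩)
    exacts [hln i j h, harn i j h, (harn j i h).symm, hbn i j h]
  · rintro i j (⟨h, -⟩ | ⟨h, -⟩)
    exacts [harn i j h, hbn i j h]
  · exact fun i j ⟨h, _⟩ => hbn i j h

theorem lineSection.head_mem {p : List V} {a b : V} (h : G.lineSection p a b) : a ∈ p :=
  List.mem_of_mem_head? h.2.2.2.1

theorem lineSection.getLast_mem {p : List V} {a b : V} (h : G.lineSection p a b) : b ∈ p :=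
  List.mem_of_getLast? h.2.2.2.2

theorem lineSection.reflTransGen_line {p : List V} {a b : V} (h : G.lineSection p a b) :
    ReflTransGen G.line a b := by
  obtain ⟨hne, hchain, -, ha, hb⟩ := h
  have := List.relationReflTransGen_of_exists_isChain p hchain hne
  rwa [(List.head_eq_iff_head?_eq_some hne).2 ha,
    (List.getLast_eq_iff_getLast?_eq_some hne).2 hb] at this

theorem IsMixedGraph.condStep2 (hG : G.IsMixedGraph) (S : Set V) :
    (G.condStep2 S).IsMixedGraph := by
  obtain ⟨hl, hl', har', hb, hb', hln, harn, hbn⟩ := hG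
  refine ⟨hl, hl', ?_, ?_, ?_, hln, ?_, ?_⟩
  · rintro i (h | ⟨s, -, p, t, -, hsec, -, hip, -⟩)
    exacts [har' i h, hip hsec.head_mem]
  · rintro i j (h | h | h)
    exacts [Or.inl (hb i j h), Or.inr (Or.inr h), Or.inr (Or.inl h)]
  · rintro i (h | ⟨s, -, p, t, -, hsec, -, hip, -⟩ | ⟨s, -, p, t, -, hsec, -, hip, -⟩)
    exacts [hb' i h, hip hsec.head_mem, hip hsec.head_mem]
  · rintro i j (h | ⟨s, -, p, t, hsj, -, hit, -⟩)
    exacts [harn i j h, ⟨(harn i t hit).1, (hbn s j hsj).2⟩]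
  · rintro i j (h | ⟨s, -, p, t, hsi, -, htj, -⟩ | ⟨s, -, p, t, hsj, -, hti, -⟩)
    exacts [hbn i j h, ⟨(hbn s i hsi).2, (hbn t j htj).2⟩, ⟨(hbn t i hti).2, (hbn s j hsj).2⟩]

def IsAnteriorClosed (G : MixedGraph V) (S : Set V) : Prop :=
  ∀ ⦃x y⦄, G.sdStep x y → y ∈ S → x ∈ S

theorem IsAnteriorClosed.mem_of_reflTransGen {S : Set V} (hS : G.IsAnteriorClosed S) {x y : V}
    (h : ReflTransGen G.sdStep x y) (hy : y ∈ S) : x ∈ S := by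
  induction h with
  | refl => exact hy
  | tail _ hst ih => exact ih (hS hst hy)

theorem isAnteriorClosed_union_antSet (G : MixedGraph V) (C : Set V) :
    G.IsAnteriorClosed (C ∪ G.antSet C) := by
  intro x y hxy hy
  by_cases hxC : x ∈ C
  · exact Or.inl hxC
  refine Or.inr ⟨?_, hxC⟩
  obtain ⟨c, hc, hyc⟩ : ∃ c ∈ C, ReflTransGen G.sdStep y c := by
    rcases hy with hyC | ⟨hy, -⟩
    · exact ⟨y, hyC, .refl⟩
    · obtain ⟨c, hc, -, hyc⟩ := Set.mem_iUnion₂.1 hy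
      exact ⟨c, hc, hyc.to_reflTransGen⟩
  exact Set.mem_biUnion hc ⟨fun hxc => hxC (hxc ▸ hc), .head' hxy hyc⟩

theorem condStep2_arrow_witness (hsym : ∀ i j, G.line i j → G.line j i) {S : Set V} {a b : V}
    (h : (G.condStep2 S).arrow a b) : ∃ t, G.arrow a t ∧ ReflTransGen G.sdStep t b := by
  rcases h with h | ⟨s, -, p, t, -, hsec, hat, -⟩
  · exact ⟨b, h, .refl⟩
  · refine ⟨t, hat, ReflTransGen.mono (fun x y h => Or.inl (hsym y x h)) _ _ ?_⟩
    exact ReflTransGen.swap _ _ hsec.reflTransGen_line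

def WitnessedOutside (G : MixedGraph V) (S : Set V) : EKind → V → V → Prop
  | .ln, i, j => (i ∈ S ∧ j ∈ S) ∨ (ReflTransGen G.sdStep i j ∧ ReflTransGen G.sdStep j i)
  | .ar, a, b => a ∈ S ∨ ∃ t, G.arrow a t ∧ ReflTransGen G.sdStep t b
  | .bi, _, _ => True

theorem IsAnteriorClosed.mem_of_witnessedOutside_ar {S : Set V} (hS : G.IsAnteriorClosed S)
    {a b : V} (h : G.WitnessedOutside S .ar a b) (hb : b ∈ S) : a ∈ S := by
  rcases h with ha | ⟨t, hat, htb⟩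
  exacts [ha, hS (Or.inr hat) (hS.mem_of_reflTransGen htb hb)]

end MixedGraph

namespace CondCl

theorem ne_and_mem_nodes {S : Set V} (hG : G.IsMixedGraph) {k : EKind} {i j : V}
    (h : CondCl G S k i j) : i ≠ j ∧ i ∈ G.nodes ∧ j ∈ G.nodes := by
  obtain ⟨-, hl', har', -, hb', hln, harn, hbn⟩ := hG
  induction h with
  | base_ln h => exact ⟨fun hij => hl' _ (hij ▸ h), hln _ _ h⟩
  | base_ar h => exact ⟨fun hij => har' _ (hij ▸ h), harn _ _ h⟩
  | base_bi h => exact ⟨fun hij => hb' _ (hij ▸ h), hbn _ _ h⟩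
  | symm_ln _ ih | symm_bi _ ih => exact ⟨ih.1.symm, ih.2.2, ih.2.1⟩
  | rLL _ _ hij _ _ _ _ ihi ihj | rBB _ _ hij _ _ _ _ ihi ihj => exact ⟨hij, ihi.2.1, ihj.2.1⟩
  | rBL _ _ hij _ _ _ _ ihi ihj => exact ⟨hij.symm, ihj.2.1, ihi.2.1⟩

theorem witnessedOutside {S : Set V}
    (hsym : ∀ i j, G.line i j → G.line j i) (hS : G.IsAnteriorClosed S)
    {k : EKind} {i j : V} (h : CondCl (G.condStep2 S) S k i j) : G.WitnessedOutside S k i j := by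
  induction h with
  | base_ln h => exact Or.inr ⟨.single (Or.inl h), .single (Or.inl (hsym _ _ h))⟩
  | base_ar h => exact Or.inr (MixedGraph.condStep2_arrow_witness hsym h)
  | base_bi _ | symm_bi _ _ | rBB _ _ _ _ _ _ _ _ _ => trivial
  | symm_ln _ ih => exact ih.imp And.symm And.symm
  | rLL hsec hsub _ _ _ _ _ ihi ihj =>
    exact Or.inl ⟨hS.mem_of_witnessedOutside_ar ihi (hsub _ hsec.head_mem),
      hS.mem_of_witnessedOutside_ar ihj (hsub _ hsec.getLast_mem)⟩
  | rBL hsec hsub _ _ _ _ _ _ ihj =>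
    exact Or.inl (hS.mem_of_witnessedOutside_ar ihj (hsub _ hsec.getLast_mem))

end CondCl

namespace MixedGraph

theorem IsMixedGraph.condCore (hG : G.IsMixedGraph) (C : Set V) :
    (G.condCore C).IsMixedGraph := by
  set S := C ∪ G.antSet C
  have hne {k i} (h : CondCl (G.condStep2 S) S k i i) : False :=
    (h.ne_and_mem_nodes (hG.condStep2 S)).1 rfl
  have hmem {k i j} (h : CondCl (G.condStep2 S) S k i j) :=
    (h.ne_and_mem_nodes (hG.condStep2 S)).2
  exact ⟨fun _ _ => .symm_ln, fun _ => hne, fun _ => hne, fun _ _ => .symm_bi,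
    fun _ => hne, fun _ _ => hmem, fun _ _ => hmem, fun _ _ => hmem⟩

theorem sdStep_removeHeads_condCore (hsym : ∀ i j, G.line i j → G.line j i) {C : Set V}
    {x y : V} (h : ((G.condCore C).removeHeads (C ∪ G.antSet C)).sdStep x y)
    (hx : x ∉ C ∪ G.antSet C) : y ∉ C ∪ G.antSet C ∧ ReflTransGen G.sdStep x y := by
  have hS := G.isAnteriorClosed_union_antSet C
  have hw {k i j} (hc : CondCl (G.condStep2 (C ∪ G.antSet C)) (C ∪ G.antSet C) k i j) :=
    hc.witnessedOutside hsym hS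
  rcases h with (hxy | ⟨hxy, hy⟩ | ⟨-, hxS⟩ | ⟨-, hxS, -⟩) | (⟨hxy, hy⟩ | ⟨-, hxS, -⟩)
  · rcases hw hxy with ⟨hxS, -⟩ | ⟨hxy, -⟩
    · exact absurd hxS hx
    · exact ⟨fun hy => hx (hS.mem_of_reflTransGen hxy hy), hxy⟩
  · exact absurd (hS.mem_of_witnessedOutside_ar (hw hxy) hy) hx
  · exact absurd hxS hx
  · exact absurd hxS hx
  · obtain ⟨t, hxt, hty⟩ := (hw hxy).resolve_left hx
    exact ⟨hy, .head (Or.inr hxt) hty⟩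
  · exact absurd hxS hx

theorem reflTransGen_removeHeads_condCore (hsym : ∀ i j, G.line i j → G.line j i) {C : Set V}
    {x y : V} (h : ReflTransGen ((G.condCore C).removeHeads (C ∪ G.antSet C)).sdStep x y)
    (hx : x ∉ C ∪ G.antSet C) : y ∉ C ∪ G.antSet C ∧ ReflTransGen G.sdStep x y := by
  induction h with
  | refl => exact ⟨hx, .refl⟩
  | tail _ hyz ih =>
    obtain ⟨hy, hxy⟩ := ih
    obtain ⟨hz, hyz⟩ := sdStep_removeHeads_condCore hsym hyz hy
    exact ⟨hz, hxy.trans hyz⟩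

theorem IsCMG.noArrowSemiDirectedCycle_removeHeads_condCore (hG : G.IsCMG) (C : Set V) :
    ((G.condCore C).removeHeads (C ∪ G.antSet C)).NoArrowSemiDirectedCycle := by
  rintro a b (⟨hab, hb⟩ | ⟨-, ha, hb⟩) hba
  · obtain ⟨ha, hba⟩ := reflTransGen_removeHeads_condCore hG.1.1 hba hb
    obtain ⟨t, hat, htb⟩ :=
      (hab.witnessedOutside hG.1.1 (G.isAnteriorClosed_union_antSet C)).resolve_left ha
    exact hG.2 a t hat (htb.trans hba)
  · exact (reflTransGen_removeHeads_condCore hG.1.1 hba hb).1 ha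

end MixedGraph

end LWF

namespace LWF

variable {V : Type*}

theorem stmt7_general (G : MixedGraph V) (hG : G.IsCMG) (C : Set V) :
    (G.alphaCond C).IsCMG :=
  ⟨((hG.1.condCore C).removeHeads _).deleteNodes C,
    (hG.noArrowSemiDirectedCycle_removeHeads_condCore C).deleteNodes C⟩

/-- Graphs generated by the conditioning algorithm are chain mixed graphs. -/
theorem stmt7 (G : MixedGraph V) (hG : G.IsCMG) (C : Set V) (hC : C ⊆ G.nodes) :
    (G.alphaCond C).IsCMG :=
  stmt7_general G hG C

end LWF
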